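/- (Proposition 2.) Let K ≥ 2 and let Δ° = {y ∈ ℝ^{K−1} : y_j > 0 for all j, and ∑_{j=1}^{K−1} y_j < 1} be the open coordinate simplex. Define p : (0,∞) × Δ° → ℝ by p(t, y) = (Γ(t+K)/Γ(t+1)) · y_1^t, and define the vector field u : (0,∞) × Δ° → ℝ^{K−1} by u_j(t, y) = C(y_1, t) · (δ_{1j} − y_j) for j = 1,…,K−1, where δ_{1j} is the Kronecker delta. Then for all t > 0 and all y ∈ Δ°, the transport (continuity) equation holds: ∂p/∂t (t,y) + ∑_{j=1}^{K−1} ∂/∂y_j [ p · u_j ](t,y) = 0. -/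

import Mathlib

/-!
Write `a = t + 1`, `c = K - 1` and `B = B(a, c)`. Then `Γ(t+K)/Γ(t+1) = Γ(c)/B`, so
`p · C(y₁, t) = -Γ(c) Ĩ_{y₁}(a, c) / (1 - y₁)^(K-1)`. The field is `C(y₁, t)(e₁ - y)`, so each of the
`K - 2` coordinates `j ≠ 1` contributes `-p C`; together they cancel the term produced by
differentiating the factor `(1 - y₁)^(2-K)` of the flux `p C (1 - y₁)`. What remains is
`∂ₜp - Γ(c) (1 - y₁)^(2-K) ∂_{y₁} Ĩ_{y₁}(a, c)`, which vanishes because the mixed partials of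
`I_x(a, c)` commute: `∂ₓ Ĩ_x(a, c) = ∂ₐ (x^(a-1) (1-x)^(c-1) / B(a, c))`. Both sides are computed by
differentiating the incomplete beta integral under the integral sign, with `s^(a-1) |log s|` bounded
uniformly for `a` near `t + 1 > 1`.
-/

/-- The incomplete beta function `B(x; a, c) = ∫_0^x s^{a-1}(1-s)^{c-1} ds`. -/
noncomputable def incBeta (x a c : ℝ) : ℝ := ∫ s in (0:ℝ)..x, s ^ (a - 1) * (1 - s) ^ (c - 1)

/-- The regularized incomplete beta function `I_x(a, c) = B(x; a, c) / B(a, c)`. -/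
noncomputable def regIncBeta (x a c : ℝ) : ℝ := incBeta x a c / incBeta 1 a c

/-- `Ĩ_x(a, c) = ∂ I_x(a, c) / ∂a`. -/
noncomputable def Itilde (x a c : ℝ) : ℝ := deriv (fun a' : ℝ => regIncBeta x a' c) a

/-- The Dirichlet flow-matching coefficient
`C(b, t) = -Ĩ_b(t+1, K-1) · B(t+1, K-1) / ((1-b)^{K-1} · b^t)`. -/
noncomputable def Ccoef (K : ℕ) (b t : ℝ) : ℝ :=
  -Itilde b (t + 1) ((K : ℝ) - 1) * incBeta 1 (t + 1) ((K : ℝ) - 1) /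
    ((1 - b) ^ (K - 1) * b ^ t)

open MeasureTheory Real Set Filter Topology Finset

noncomputable def incBetaLog (x a c : ℝ) : ℝ :=
  ∫ s in (0:ℝ)..x, s ^ (a - 1) * log s * (1 - s) ^ (c - 1)

section IncompleteBeta

variable {a c x : ℝ}

lemma continuous_betaIntegrand (ha : 1 ≤ a) (hc : 1 ≤ c) :
    Continuous fun s : ℝ => s ^ (a - 1) * (1 - s) ^ (c - 1) :=
  (continuous_rpow_const (by linarith)).mul
    ((continuous_rpow_const (by linarith)).comp (continuous_const.sub continuous_id))

lemma measurable_logBetaIntegrand :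
    Measurable fun s : ℝ => s ^ (a - 1) * log s * (1 - s) ^ (c - 1) := by
  fun_prop

lemma abs_logBetaIntegrand_lt {d s : ℝ} (hd : 0 < d) (hda : d ≤ a - 1) (hc : 1 ≤ c)
    (hs : s ∈ Ioc (0:ℝ) 1) :
    |s ^ (a - 1) * log s * (1 - s) ^ (c - 1)| < 1 / d := by
  have h1s : 0 ≤ 1 - s := sub_nonneg.2 hs.2
  have hpow : s ^ (a - 1) ≤ s ^ d := rpow_le_rpow_of_exponent_ge hs.1 hs.2 hda
  have hfac : (1 - s) ^ (c - 1) ≤ 1 := rpow_le_one h1s (by linarith [hs.1]) (by linarith)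
  have := rpow_nonneg hs.1.le d
  calc |s ^ (a - 1) * log s * (1 - s) ^ (c - 1)|
      = s ^ (a - 1) * |log s| * (1 - s) ^ (c - 1) := by
        rw [abs_mul, abs_mul, abs_of_nonneg (rpow_nonneg hs.1.le _),
          abs_of_nonneg (rpow_nonneg h1s _)]
    _ ≤ s ^ d * |log s| * 1 := by gcongr
    _ = |log s * s ^ d| := by rw [abs_mul, abs_of_nonneg (rpow_nonneg hs.1.le _)]; ring
    _ < 1 / d := abs_log_mul_self_rpow_lt s d hs.1 hs.2 hd

lemma intervalIntegrable_logBetaIntegrand (ha : 1 < a) (hc : 1 ≤ c) (hx : x ∈ Icc (0:ℝ) 1) :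
    IntervalIntegrable (fun s => s ^ (a - 1) * log s * (1 - s) ^ (c - 1)) volume 0 x := by
  rw [intervalIntegrable_iff_integrableOn_Ioc_of_le hx.1]
  refine Integrable.mono' (g := fun _ => 1 / (a - 1)) (integrableOn_const measure_Ioc_lt_top.ne)
    measurable_logBetaIntegrand.aestronglyMeasurable ((ae_restrict_iff' measurableSet_Ioc).2 ?_)
  exact ae_of_all _ fun s hs =>
    (abs_logBetaIntegrand_lt (sub_pos.2 ha) le_rfl hc ⟨hs.1, hs.2.trans hx.2⟩).le

theorem hasDerivAt_incBeta_param (ha : 1 < a) (hc : 1 ≤ c) (hx : x ∈ Icc (0:ℝ) 1) :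
    HasDerivAt (fun a' => incBeta x a' c) (incBetaLog x a c) a := by
  set d := (a - 1) / 2 with hd_def
  have hd : 0 < d := half_pos (sub_pos.2 ha)
  have hball : ∀ a' ∈ Metric.ball a d, d ≤ a' - 1 := fun a' h => by
    rw [Metric.mem_ball, dist_eq, abs_lt] at h
    linarith [h.1, hd_def]
  refine (intervalIntegral.hasDerivAt_integral_of_dominated_loc_of_deriv_le
    (F := fun a' s => s ^ (a' - 1) * (1 - s) ^ (c - 1))
    (F' := fun a' s => s ^ (a' - 1) * log s * (1 - s) ^ (c - 1))
    (bound := fun _ => 1 / d) (Metric.ball_mem_nhds a hd)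
    (Eventually.of_forall fun _ => (by fun_prop : Measurable _).aestronglyMeasurable)
    ((continuous_betaIntegrand ha.le hc).intervalIntegrable 0 x)
    measurable_logBetaIntegrand.aestronglyMeasurable ?_ intervalIntegrable_const ?_).2
  · refine ae_of_all _ fun s hs a' ha' => ?_
    rw [uIoc_of_le hx.1] at hs
    exact (abs_logBetaIntegrand_lt hd (hball a' ha') hc ⟨hs.1, hs.2.trans hx.2⟩).le
  · refine ae_of_all _ fun s hs a' _ => ?_
    rw [uIoc_of_le hx.1] at hs
    have hexp := (hasStrictDerivAt_const_rpow hs.1 (a' - 1)).hasDerivAt.comp a'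
      ((hasDerivAt_id a').sub_const 1)
    simpa using hexp.mul_const ((1 - s) ^ (c - 1))

theorem hasDerivAt_incBeta_right (ha : 1 ≤ a) (hc : 1 ≤ c) (x : ℝ) :
    HasDerivAt (fun x' => incBeta x' a c) (x ^ (a - 1) * (1 - x) ^ (c - 1)) x :=
  ((continuous_betaIntegrand ha hc).integral_hasStrictDerivAt 0 x).hasDerivAt

theorem hasDerivAt_incBetaLog_right (ha : 1 < a) (hc : 1 ≤ c) (hx : x ∈ Ioc (0:ℝ) 1) :
    HasDerivAt (fun x' => incBetaLog x' a c) (x ^ (a - 1) * log x * (1 - x) ^ (c - 1)) x := by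
  refine intervalIntegral.integral_hasDerivAt_right
    (intervalIntegrable_logBetaIntegrand ha hc ⟨hx.1.le, hx.2⟩)
    measurable_logBetaIntegrand.aestronglyMeasurable.stronglyMeasurableAtFilter ?_
  exact ((continuous_rpow_const (by linarith)).continuousAt.mul (continuousAt_log hx.1.ne')).mul
    ((continuous_rpow_const (by linarith)).comp (continuous_const.sub continuous_id)).continuousAt

theorem incBeta_one_eq_beta (ha : 0 < a) (hc : 0 < c) :
    incBeta 1 a c = ProbabilityTheory.beta a c := by
  have hcomplex : Complex.betaIntegral a c = incBeta 1 a c := by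
    rw [Complex.betaIntegral, incBeta, ← intervalIntegral.integral_ofReal]
    refine intervalIntegral.integral_congr fun s hs => ?_
    rw [Set.uIcc_of_le zero_le_one] at hs
    simp only [Complex.ofReal_mul, Complex.ofReal_cpow hs.1,
      Complex.ofReal_cpow (sub_nonneg.2 hs.2), Complex.ofReal_sub, Complex.ofReal_one]
  rw [ProbabilityTheory.beta_eq_betaIntegralReal a c ha hc, hcomplex, Complex.ofReal_re]

theorem incBeta_one_pos (ha : 0 < a) (hc : 0 < c) : 0 < incBeta 1 a c :=
  incBeta_one_eq_beta ha hc ▸ ProbabilityTheory.beta_pos ha hc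

theorem Gamma_add_div_Gamma (ha : 0 < a) (hc : 0 < c) :
    Gamma (a + c) / Gamma a = Gamma c / incBeta 1 a c := by
  have := (Gamma_pos_of_pos ha).ne'
  have := (Gamma_pos_of_pos (add_pos ha hc)).ne'
  rw [incBeta_one_eq_beta ha hc, ProbabilityTheory.beta]
  field_simp

theorem Itilde_eq (ha : 1 < a) (hc : 1 ≤ c) (hx : x ∈ Icc (0:ℝ) 1) :
    Itilde x a c = (incBetaLog x a c * incBeta 1 a c - incBeta x a c * incBetaLog 1 a c) /
      incBeta 1 a c ^ 2 :=
  ((hasDerivAt_incBeta_param ha hc hx).div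
    (hasDerivAt_incBeta_param ha hc ⟨zero_le_one, le_rfl⟩)
    (incBeta_one_pos (by linarith) (by linarith)).ne').deriv

theorem hasDerivAt_Itilde_right (ha : 1 < a) (hc : 1 ≤ c) (hx : x ∈ Ioo (0:ℝ) 1) :
    HasDerivAt (fun x' => Itilde x' a c)
      (x ^ (a - 1) * (1 - x) ^ (c - 1) * (incBeta 1 a c * log x - incBetaLog 1 a c) /
        incBeta 1 a c ^ 2) x := by
  have hEq : (fun x' => Itilde x' a c) =ᶠ[𝓝 x] fun x' =>
      (incBetaLog x' a c * incBeta 1 a c - incBeta x' a c * incBetaLog 1 a c) /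
        incBeta 1 a c ^ 2 := by
    filter_upwards [Ioo_mem_nhds hx.1 hx.2] with x' hx'
    exact Itilde_eq ha hc (Ioo_subset_Icc_self hx')
  refine HasDerivAt.congr_of_eventuallyEq ?_ hEq
  refine ((((hasDerivAt_incBetaLog_right ha hc (Ioo_subset_Ioc_self hx)).mul_const
    (incBeta 1 a c)).sub ((hasDerivAt_incBeta_right ha.le hc x).mul_const
    (incBetaLog 1 a c))).div_const (incBeta 1 a c ^ 2)).congr_deriv ?_
  ring

end IncompleteBeta

theorem sum_deriv_update_mul_sub {n : ℕ} (φ : ℝ → ℝ) (y : Fin n → ℝ) (z : Fin n) :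
    ∑ j, deriv (fun s => φ (Function.update y j s z) * ((if j = z then (1:ℝ) else 0) - s)) (y j)
      = deriv (fun s => φ s * (1 - s)) (y z) - ((n:ℝ) - 1) * φ (y z) := by
  have hoff : ∀ j ∈ univ.erase z,
      deriv (fun s => φ (Function.update y j s z) * ((if j = z then (1:ℝ) else 0) - s)) (y j)
        = -φ (y z) := by
    intro j hj
    have hjz := ne_of_mem_erase hj
    have hfun : (fun s => φ (Function.update y j s z) * ((if j = z then (1:ℝ) else 0) - s)) =
        fun s => φ (y z) * (0 - s) := by
      funext s
      rw [Function.update_of_ne hjz.symm, if_neg hjz]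
    rw [hfun, ((((hasDerivAt_id' _).const_sub 0).const_mul (φ (y z)))).deriv, mul_neg_one]
  have hn : 1 ≤ n := z.pos
  rw [← add_sum_erase _ _ (mem_univ z), sum_congr rfl hoff, sum_const,
    card_erase_of_mem (mem_univ z)]
  simp only [Function.update_self, ↓reduceIte, card_univ, Fintype.card_fin, nsmul_eq_mul,
    Nat.cast_sub hn, Nat.cast_one]
  ring

section DirichletPath

variable {K : ℕ} {t b : ℝ}

noncomputable def dirichletDensity (K : ℕ) (t b : ℝ) : ℝ := Gamma (t + K) / Gamma (t + 1) * b ^ t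

lemma one_le_natCast_sub_one (hK : 2 ≤ K) : (1:ℝ) ≤ K - 1 := by
  have : (2:ℝ) ≤ K := by exact_mod_cast hK
  linarith

theorem dirichletDensity_eq (hK : 2 ≤ K) (ht : -1 < t) :
    dirichletDensity K t b = Gamma (K - 1) / incBeta 1 (t + 1) (K - 1) * b ^ t := by
  rw [dirichletDensity, ← Gamma_add_div_Gamma (by linarith)
    (by linarith [one_le_natCast_sub_one hK]), show t + 1 + ((K:ℝ) - 1) = t + K by ring]

theorem hasDerivAt_dirichletDensity_time (hK : 2 ≤ K) (hb : 0 < b) (ht : 0 < t) :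
    HasDerivAt (fun t' => dirichletDensity K t' b)
      (Gamma (K - 1) * b ^ t *
          (incBeta 1 (t + 1) (K - 1) * log b - incBetaLog 1 (t + 1) (K - 1)) /
        incBeta 1 (t + 1) (K - 1) ^ 2) t := by
  have hc := one_le_natCast_sub_one hK
  have hEq : (fun t' => dirichletDensity K t' b) =ᶠ[𝓝 t]
      fun t' => Gamma (K - 1) * b ^ t' / incBeta 1 (t' + 1) (K - 1) := by
    filter_upwards [Ioi_mem_nhds (by linarith : (-1:ℝ) < t)] with t' ht'
    rw [dirichletDensity_eq hK ht']
    ring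
  have hB : HasDerivAt (fun t' => incBeta 1 (t' + 1) (K - 1)) (incBetaLog 1 (t + 1) (K - 1)) t :=
    (hasDerivAt_incBeta_param (by linarith) hc ⟨zero_le_one, le_rfl⟩).comp_add_const t 1
  refine ((((hasStrictDerivAt_const_rpow hb t).hasDerivAt.const_mul (Gamma (K - 1))).div hB
    (incBeta_one_pos (by linarith) (by linarith)).ne').congr_deriv ?_).congr_of_eventuallyEq hEq
  ring

theorem dirichletDensity_mul_Ccoef (hK : 2 ≤ K) (ht : -1 < t) (hb : b ∈ Ioo (0:ℝ) 1) :
    dirichletDensity K t b * Ccoef K b t =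
      -Gamma (K - 1) * Itilde b (t + 1) (K - 1) / (1 - b) ^ (K - 1) := by
  have := (incBeta_one_pos (a := t + 1) (c := (K:ℝ) - 1) (by linarith)
    (by linarith [one_le_natCast_sub_one hK])).ne'
  have := (rpow_pos_of_pos hb.1 t).ne'
  have := pow_ne_zero (K - 1) (sub_pos.2 hb.2).ne'
  rw [dirichletDensity_eq hK ht, Ccoef]
  field_simp

theorem hasDerivAt_dirichletFlux (hK : 2 ≤ K) (ht : 0 < t) (hb : b ∈ Ioo (0:ℝ) 1) :
    HasDerivAt (fun s => dirichletDensity K t s * Ccoef K s t * (1 - s))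
      ((K - 2) * (dirichletDensity K t b * Ccoef K b t) -
        deriv (fun t' => dirichletDensity K t' b) t) b := by
  obtain ⟨m, rfl⟩ := Nat.exists_eq_add_of_le' hK
  have hc : ((m + 2 : ℕ) : ℝ) - 1 = m + 1 := by push_cast; ring
  have hK1 : m + 2 - 1 = m + 1 := rfl
  have hEq : (fun s => dirichletDensity (m + 2) t s * Ccoef (m + 2) s t * (1 - s)) =ᶠ[𝓝 b]
      fun s => -Gamma (↑(m + 2) - 1) * Itilde s (t + 1) (↑(m + 2) - 1) * (1 - s) /
        (1 - s) ^ (m + 1) := by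
    filter_upwards [Ioo_mem_nhds hb.1 hb.2] with s hs
    rw [dirichletDensity_mul_Ccoef hK (by linarith) hs, hK1]
    ring
  have hI := hasDerivAt_Itilde_right (a := t + 1) (by linarith) (one_le_natCast_sub_one hK) hb
  have hsub := (hasDerivAt_id' b).const_sub 1
  refine ((((hI.const_mul _).mul hsub).div (hsub.pow (m + 1))
    (pow_ne_zero _ (sub_pos.2 hb.2).ne')).congr_deriv ?_).congr_of_eventuallyEq hEq
  rw [(hasDerivAt_dirichletDensity_time hK hb.1 ht).deriv,
    dirichletDensity_mul_Ccoef hK (by linarith) hb, hK1, hc, add_sub_cancel_right,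
    add_sub_cancel_right, Nat.add_sub_cancel, rpow_natCast]
  have := (sub_pos.2 hb.2).ne'
  have := (incBeta_one_pos (a := t + 1) (c := (m:ℝ) + 1) (by linarith) (by positivity)).ne'
  simp only [Pi.pow_apply, Pi.mul_apply]
  push_cast
  field_simp
  ring

end DirichletPath

/-- **Proposition 2.** On the open coordinate simplex
`Δ° = {y : y_j > 0, ∑ y_j < 1} ⊆ ℝ^{K-1}`, the Dirichlet conditional probability path
`p(t, y) = (Γ(t+K)/Γ(t+1)) y_1^t` and the vector field
`u_j(t, y) = C(y_1, t)(δ_{1j} - y_j)` satisfy the transport (continuity) equation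
`∂p/∂t + ∑_j ∂/∂y_j (p u_j) = 0`. -/
theorem dirichletFM_transport_equation (K : ℕ) (hK : 2 ≤ K) :
    ∀ t : ℝ, 0 < t → ∀ y : Fin (K - 1) → ℝ, (∀ j, 0 < y j) → (∑ j, y j) < 1 →
      deriv (fun t' : ℝ =>
          Real.Gamma (t' + K) / Real.Gamma (t' + 1) * (y ⟨0, by omega⟩) ^ t') t
      + ∑ j : Fin (K - 1),
          deriv (fun s : ℝ =>
            (Real.Gamma (t + K) / Real.Gamma (t + 1) *
                ((Function.update y j s) ⟨0, by omega⟩) ^ t) *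
              (Ccoef K ((Function.update y j s) ⟨0, by omega⟩) t *
                ((if j = ⟨0, by omega⟩ then (1 : ℝ) else 0) - s)))
            (y j)
      = 0 := by
  intro t ht y hy hsum
  have hb : y ⟨0, by omega⟩ ∈ Ioo (0:ℝ) 1 :=
    ⟨hy _, (single_le_sum (fun j _ => (hy j).le) (mem_univ _)).trans_lt hsum⟩
  simp only [← dirichletDensity.eq_1, ← mul_assoc]
  rw [sum_deriv_update_mul_sub (fun u => dirichletDensity K t u * Ccoef K u t),
    (hasDerivAt_dirichletFlux hK ht hb).deriv, Nat.cast_sub (by omega : 1 ≤ K)]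
  ring
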